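/- In a perfect REL-algebra, let a, b, c be atoms with a ≤ b;c. Then b;1' ≠ 0 if and only if 1';c ≠ 0, and in that case Eb = Sc. -/
import Mathlib


class PerfectREL (α : Type*) [CompleteBooleanAlgebra α] [IsAtomic α] where
  comp : α → α → α
  conv : α → α
  id' : α
  ax2 : ∀ x y : α, conv (x ⊓ conv y) = conv x ⊓ y
  ax3l : ∀ x y z : α, comp (x ⊔ y) z = comp x z ⊔ comp y z
  ax3r : ∀ x y z : α, comp x (y ⊔ z) = comp x y ⊔ comp x z
  ax4l : comp (⊤ : α) ⊥ = ⊥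
  ax4r : comp (⊥ : α) ⊤ = ⊥
  ax5l : ∀ x y z : α, comp (conv x) y ⊓ z = comp (conv x) (y ⊓ comp (conv (conv x)) z) ⊓ z
  ax5r : ∀ x y z : α, comp x (conv y) ⊓ z = comp (x ⊓ comp z (conv (conv y))) (conv y) ⊓ z
  ax6l : ∀ x : α, comp id' x ≤ x
  ax6r : ∀ x : α, comp x id' ≤ x
  ax7 : comp (id' : α) id' = id'
  ax8 : comp ((conv (⊤ : α))ᶜ) ((conv (⊤ : α))ᶜ) ⊓ id' = ⊥
  ax9a : ∀ x y z : α, comp (comp (x ⊓ id') y) z = comp (x ⊓ id') (comp y z)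
  ax9b : ∀ x y z : α, comp (comp x (y ⊓ id')) z = comp x (comp (y ⊓ id') z)
  ax9c : ∀ x y z : α, comp (comp x y) (z ⊓ id') = comp x (comp y (z ⊓ id'))
  conv_sSup : ∀ S : Set α, conv (sSup S) = ⨆ x ∈ S, conv x
  comp_sSup_left : ∀ (S : Set α) (y : α), comp (sSup S) y = ⨆ x ∈ S, comp x y
  comp_sSup_right : ∀ (x : α) (S : Set α), comp x (sSup S) = ⨆ y ∈ S, comp x y

open PerfectREL

variable {α : Type*} [CompleteBooleanAlgebra α] [IsAtomic α] [PerfectREL α]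

private lemma comp_mono_left' {x y : α} (z : α) (h : x ≤ y) : comp x z ≤ comp y z := by
  have h1 : comp y z = comp x z ⊔ comp y z := by
    rw [← ax3l, sup_eq_right.mpr h]
  exact h1 ▸ le_sup_left

private lemma comp_mono_right' (x : α) {y z : α} (h : y ≤ z) : comp x y ≤ comp x z := by
  have h1 : comp x z = comp x y ⊔ comp x z := by
    rw [← ax3r, sup_eq_right.mpr h]
  exact h1 ▸ le_sup_left

private lemma comp_bot' (x : α) : comp x (⊥ : α) = ⊥ :=
  le_bot_iff.mp ((comp_mono_left' (⊥ : α) (le_top (a := x))).trans_eq ax4l)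

private lemma bot_comp' (y : α) : comp (⊥ : α) y = ⊥ :=
  le_bot_iff.mp ((comp_mono_right' (⊥ : α) (le_top (a := y))).trans_eq ax4r)

private lemma id_eq_sSup_atoms : (id' : α) = sSup {s : α | IsAtom s ∧ s ≤ id'} := by
  refine le_antisymm ?_ (sSup_le fun s hs => hs.2)
  refine BooleanAlgebra.le_iff_atom_le_imp.mpr fun s hs hle => le_sSup ⟨hs, hle⟩

/-- decompose: if comp with id' is nonzero, some subidentity atom gives a nonzero comp -/
private lemma exists_atom_right (b : α) (hne : comp b id' ≠ ⊥) :
    ∃ s : α, IsAtom s ∧ s ≤ id' ∧ comp b s ≠ ⊥ := by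
  by_contra hcon
  push_neg at hcon
  apply hne
  rw [id_eq_sSup_atoms, comp_sSup_right]
  refine iSup_eq_bot.mpr fun s => iSup_eq_bot.mpr fun hs => ?_
  by_contra hne'
  exact hne' (hcon s hs.1 hs.2)

private lemma exists_atom_left (c : α) (hne : comp id' c ≠ ⊥) :
    ∃ s : α, IsAtom s ∧ s ≤ id' ∧ comp s c ≠ ⊥ := by
  by_contra hcon
  push_neg at hcon
  apply hne
  rw [id_eq_sSup_atoms, comp_sSup_left]
  refine iSup_eq_bot.mpr fun s => iSup_eq_bot.mpr fun hs => ?_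
  by_contra hne'
  exact hne' (hcon s hs.1 hs.2)

theorem ES_compat (a b c : α) (ha : IsAtom a) (hb : IsAtom b) (hc : IsAtom c)
    (h : a ≤ comp b c) :
    (comp b id' ≠ (⊥ : α) ↔ comp id' c ≠ (⊥ : α)) ∧
      ∀ eb sc : α, IsAtom eb → eb ≤ id' → comp b eb = b →
        IsAtom sc → sc ≤ id' → comp sc c = c → eb = sc := by
  have hbc : comp b c ≠ ⊥ := fun hbot => ha.1 (le_bot_iff.mp (hbot ▸ h))
  constructor
  · constructor
    · -- comp b id' ≠ ⊥ → comp id' c ≠ ⊥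
      intro h1
      obtain ⟨s, hs, hsle, hbs⟩ := exists_atom_right b h1
      -- comp b s ≤ b, nonzero, so comp b s = b
      have hbsb : comp b s = b := by
        have hle : comp b s ≤ b := (comp_mono_right' b hsle).trans (ax6r b)
        rcases (hb.le_iff.mp hle) with h' | h'
        · exact absurd h' hbs
        · exact h'
      -- comp b c = comp b (comp s c)
      have key : comp b c = comp b (comp s c) := by
        conv_lhs => rw [← hbsb]
        have : comp (comp b (s ⊓ id')) c = comp b (comp (s ⊓ id') c) := ax9b b s c
        rwa [inf_eq_left.mpr hsle] at this
      intro h2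
      apply hbc
      have hsc : comp s c = ⊥ := by
        refine le_bot_iff.mp ?_
        calc comp s c ≤ comp id' c := comp_mono_left' c hsle
        _ = ⊥ := h2
      rw [key, hsc, comp_bot']
    · -- comp id' c ≠ ⊥ → comp b id' ≠ ⊥
      intro h1
      obtain ⟨s, hs, hsle, hsc⟩ := exists_atom_left c h1
      have hscc : comp s c = c := by
        have hle : comp s c ≤ c := (comp_mono_left' c hsle).trans (ax6l c)
        rcases (hc.le_iff.mp hle) with h' | h'
        · exact absurd h' hsc
        · exact h'
      have key : comp b c = comp (comp b s) c := by
        conv_lhs => rw [← hscc]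
        have : comp (comp b (s ⊓ id')) c = comp b (comp (s ⊓ id') c) := ax9b b s c
        rw [inf_eq_left.mpr hsle] at this
        exact this.symm
      intro h2
      apply hbc
      have hbsb : comp b s = ⊥ := by
        refine le_bot_iff.mp ?_
        calc comp b s ≤ comp b id' := comp_mono_right' b hsle
        _ = ⊥ := h2
      rw [key, hbsb, bot_comp']
  · intro eb sc heb heble hbeb hsc hscle hscc
    by_contra hne
    -- distinct subidentity atoms compose to ⊥
    have hdisj : eb ⊓ sc = ⊥ := by
      rcases heb.le_iff.mp (inf_le_left : eb ⊓ sc ≤ eb) with h' | h'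
      · exact h'
      · exact absurd ((hsc.le_iff.mp (inf_eq_left.mp h')).resolve_left heb.1) hne
    have hcomp_bot : comp eb sc = ⊥ := by
      refine le_bot_iff.mp (hdisj ▸ le_inf ?_ ?_)
      · exact (comp_mono_right' eb hscle).trans (ax6r eb)
      · exact (comp_mono_left' sc heble).trans (ax6l sc)
    -- comp b sc ≠ ⊥ since comp b c = comp (comp b sc) c ≠ ⊥
    have key1 : comp b c = comp (comp b sc) c := by
      conv_lhs => rw [← hscc]
      have : comp (comp b (sc ⊓ id')) c = comp b (comp (sc ⊓ id') c) := ax9b b sc c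
      rw [inf_eq_left.mpr hscle] at this
      exact this.symm
    have hbsc : comp b sc ≠ ⊥ := by
      intro hbot
      exact hbc (by rw [key1, hbot, bot_comp'])
    -- but comp b sc = comp b (comp eb sc) = ⊥
    apply hbsc
    have key2 : comp b sc = comp b (comp eb sc) := by
      conv_lhs => rw [← hbeb]
      have : comp (comp b eb) (sc ⊓ id') = comp b (comp eb (sc ⊓ id')) := ax9c b eb sc
      rwa [inf_eq_left.mpr hscle] at this
    rw [key2, hcomp_bot, comp_bot']
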